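/- Let a₁, a₃ be continuous real functions on an interval containing t₀, set A₁(t) = ∫_{t₀}^t a₁(s) ds, and suppose cos(2A₁(t)) ≠ 0 and a₂(t) = −a₃(t)·tan(2A₁(t)). Then q(t) := exp(i·A₁(t))·exp(k·θ₃(t)), with θ₃(t) = ∫_{t₀}^t a₃(s)/cos(2A₁(s)) ds, satisfies q'(t) = (a₁(t)i + a₂(t)j + a₃(t)k)q(t) and q(t₀) = 1. -/

import Mathlib

noncomputable def qi : Quaternion ℝ := ⟨0, 1, 0, 0⟩
noncomputable def qj : Quaternion ℝ := ⟨0, 0, 1, 0⟩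
noncomputable def qk : Quaternion ℝ := ⟨0, 0, 0, 1⟩

noncomputable def expI (θ : ℝ) : Quaternion ℝ := ⟨Real.cos θ, Real.sin θ, 0, 0⟩
noncomputable def expK (θ : ℝ) : Quaternion ℝ := ⟨Real.cos θ, 0, 0, Real.sin θ⟩

/-! Both factors of `q` are exponentials `cos θ + u sin θ` of square roots `u` of `-1`, so
`(expI A₁)' = a₁ i expI A₁` and `(expK θ₃)' = θ₃' k expK θ₃`. Moving `k` to the left through
`expI A₁` conjugates it into `cos (2A₁) k - sin (2A₁) j`, and the choice of `θ₃'` and of `a₂`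
makes `θ₃' (cos (2A₁) k - sin (2A₁) j) = a₂ j + a₃ k`. -/

open scoped Quaternion

theorem hasDerivAt_intervalIntegral_of_continuousOn {S : Set ℝ} (hSopen : IsOpen S)
    (hSconn : S.OrdConnected) {t₀ t : ℝ} (ht₀ : t₀ ∈ S) (ht : t ∈ S) {f : ℝ → ℝ}
    (hf : ContinuousOn f S) :
    HasDerivAt (fun t => ∫ s in t₀..t, f s) (f t) t :=
  intervalIntegral.integral_hasDerivAt_right
    ((hf.mono (hSconn.uIcc_subset ht₀ ht)).intervalIntegrable)
    (hf.stronglyMeasurableAtFilter hSopen t ht) (hf.continuousAt (hSopen.mem_nhds ht))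

theorem hasDerivAt_cos_smul_one_add_sin_smul {𝔸 : Type*} [NormedRing 𝔸] [NormedAlgebra ℝ 𝔸]
    {u : 𝔸} (hu : u * u = -1) (θ : ℝ) :
    HasDerivAt (fun θ => Real.cos θ • (1 : 𝔸) + Real.sin θ • u)
      (u * (Real.cos θ • (1 : 𝔸) + Real.sin θ • u)) θ := by
  refine (((Real.hasDerivAt_cos θ).smul_const (1 : 𝔸)).add
    ((Real.hasDerivAt_sin θ).smul_const u)).congr_deriv ?_
  rw [mul_add, mul_smul_comm, mul_smul_comm, mul_one, hu, smul_neg, neg_smul]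
  abel

theorem expI_eq (θ : ℝ) : expI θ = Real.cos θ • (1 : ℍ[ℝ]) + Real.sin θ • qi := by
  ext <;> simp <;> simp [expI, qi]

theorem expK_eq (θ : ℝ) : expK θ = Real.cos θ • (1 : ℍ[ℝ]) + Real.sin θ • qk := by
  ext <;> simp <;> simp [expK, qk]

theorem hasDerivAt_expI (θ : ℝ) : HasDerivAt expI (qi * expI θ) θ := by
  rw [funext expI_eq]
  exact hasDerivAt_cos_smul_one_add_sin_smul (by ext <;> simp <;> simp [qi]) θ

theorem hasDerivAt_expK (θ : ℝ) : HasDerivAt expK (qk * expK θ) θ := by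
  rw [funext expK_eq]
  exact hasDerivAt_cos_smul_one_add_sin_smul (by ext <;> simp <;> simp [qk]) θ

@[simp] theorem expI_zero : expI 0 = 1 := by
  ext <;> simp [expI]

@[simp] theorem expK_zero : expK 0 = 1 := by
  ext <;> simp [expK]

theorem expI_mul_qk (θ : ℝ) :
    expI θ * qk = (Real.cos (2 * θ) • qk - Real.sin (2 * θ) • qj) * expI θ := by
  rw [Real.cos_two_mul, Real.sin_two_mul]
  ext <;> simp <;> simp [expI, qj, qk]
  · ring
  · linear_combination (-2 * Real.cos θ) * Real.sin_sq_add_cos_sq θ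

theorem HasDerivAt.expI_mul_expK {A θ : ℝ → ℝ} {α β t : ℝ} (hA : HasDerivAt A α t)
    (hθ : HasDerivAt θ β t) :
    HasDerivAt (fun s => expI (A s) * expK (θ s))
      ((α • qi + β • (Real.cos (2 * A t) • qk - Real.sin (2 * A t) • qj)) *
        (expI (A t) * expK (θ t))) t := by
  refine (((hasDerivAt_expI (A t)).scomp t hA).mul
    ((hasDerivAt_expK (θ t)).scomp t hθ)).congr_deriv ?_
  rw [Function.comp_apply, Function.comp_apply, mul_smul_comm, ← mul_assoc (expI (A t)),
    expI_mul_qk]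
  simp only [add_mul, smul_mul_assoc, mul_assoc]

theorem caseII_exact_solution
    (S : Set ℝ) (hSopen : IsOpen S) (hSconn : S.OrdConnected)
    (t₀ : ℝ) (ht₀ : t₀ ∈ S)
    (a₁ a₂ a₃ : ℝ → ℝ)
    (ha₁ : ContinuousOn a₁ S) (ha₃ : ContinuousOn a₃ S)
    (A₁ θ₃ : ℝ → ℝ)
    (hA₁ : ∀ t, A₁ t = ∫ s in t₀..t, a₁ s)
    (hcos : ∀ t ∈ S, Real.cos (2 * A₁ t) ≠ 0)
    (ha₂ : ∀ t ∈ S, a₂ t = -(a₃ t * Real.tan (2 * A₁ t)))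
    (hθ₃ : ∀ t, θ₃ t = ∫ s in t₀..t, a₃ s / Real.cos (2 * A₁ s)) :
    (∀ t ∈ S, HasDerivAt (fun s => expI (A₁ s) * expK (θ₃ s))
        ((a₁ t • qi + a₂ t • qj + a₃ t • qk) * (expI (A₁ t) * expK (θ₃ t))) t) ∧
      expI (A₁ t₀) * expK (θ₃ t₀) = 1 := by
  have hA : ∀ t ∈ S, HasDerivAt A₁ (a₁ t) t := fun t ht => by
    rw [funext hA₁]
    exact hasDerivAt_intervalIntegral_of_continuousOn hSopen hSconn ht₀ ht ha₁
  have hA₁cont : ContinuousOn A₁ S := fun t ht => (hA t ht).continuousAt.continuousWithinAt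
  have hθ : ∀ t ∈ S, HasDerivAt θ₃ (a₃ t / Real.cos (2 * A₁ t)) t := fun t ht => by
    rw [funext hθ₃]
    exact hasDerivAt_intervalIntegral_of_continuousOn hSopen hSconn ht₀ ht
      (ha₃.div (Real.continuous_cos.comp_continuousOn (continuousOn_const.mul hA₁cont)) hcos)
  refine ⟨fun t ht => ?_, by simp [hA₁, hθ₃]⟩
  have hcoeff : (a₃ t / Real.cos (2 * A₁ t)) •
      (Real.cos (2 * A₁ t) • qk - Real.sin (2 * A₁ t) • qj) = a₂ t • qj + a₃ t • qk := by
    rw [smul_sub, smul_smul, smul_smul, div_mul_cancel₀ _ (hcos t ht), ha₂ t ht,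
      Real.tan_eq_sin_div_cos, div_mul_eq_mul_div, mul_div_assoc, sub_eq_neg_add, neg_smul]
  rw [add_assoc, ← hcoeff]
  exact (hA t ht).expI_mul_expK (hθ t ht)
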